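/- Let (α_t, β_t)_{t≥0} be a GDGA sequence with step size η ∈ (0, min{1, μ/(4σ)}), and assume the global error bound with constant τ > 0. Then for every t ≥ 0, ‖α_t − proj_{Ω*}(α_t)‖ ≤ (τ/η)‖α_t − α_{t+1}‖ + τ√σ ε̂. -/

import Mathlib

open scoped RealInnerProductSpace
open Matrix

/-- The largest eigenvalue of the positive semidefinite matrix `D * Dᵀ`, realized as the
operator norm of the associated Euclidean linear map. -/
noncomputable def sigmaMax {m d : ℕ} (D : Matrix (Fin m) (Fin d) ℝ) : ℝ :=
  ‖Matrix.toEuclideanCLM (𝕜 := ℝ) (D * Dᵀ)‖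

/-- The ℓ∞-ball of radius `lam` in `ℝ^m`. -/
def BinfBall (m : ℕ) (lam : ℝ) : Set (EuclideanSpace ℝ (Fin m)) :=
  {a | ∀ i, |a i| ≤ lam}

/-- `p` is the Euclidean projection of `x` onto `C`. -/
def IsProjOn {E : Type*} [NormedAddCommGroup E] (C : Set E) (x p : E) : Prop :=
  p ∈ C ∧ ∀ q ∈ C, ‖x - p‖ ≤ ‖x - q‖

/-! The gradient of the dual objective at `a` is `D β*(a)`: `fbar` is a supremum of affine
functions of `a`, attained at `β*(a)`, so `D β*(a)` is a subgradient, and a subgradient of a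
differentiable function is its gradient. The error bound controls the distance to `Ω*` by the
residual `‖a - P(a - ∇fbar a)‖`, which for a step `η ≤ 1` is at most
`η⁻¹ ‖a - P(a - η ∇fbar a)‖`. The exact step `P(a - η ∇fbar a)` and the computed `α (t + 1)` are
at most `η √σ ε̂` apart, since projections onto convex sets are nonexpansive and `√σ` is the
operator norm of `D`. -/

section Projection

variable {E : Type*} [NormedAddCommGroup E] {C : Set E} {x y p q : E}

theorem isProjOn_iff_norm_eq_iInf (hp : p ∈ C) :
    IsProjOn C x p ↔ ‖x - p‖ = ⨅ w : C, ‖x - w‖ := by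
  have : Nonempty C := ⟨⟨p, hp⟩⟩
  have hbdd : BddBelow (Set.range fun w : C => ‖x - w‖) :=
    ⟨0, Set.forall_mem_range.2 fun _ => norm_nonneg _⟩
  refine ⟨fun h => le_antisymm (le_ciInf fun w => h.2 w w.2) (ciInf_le hbdd ⟨p, hp⟩),
    fun h => ⟨hp, fun q hq => h ▸ ciInf_le hbdd ⟨q, hq⟩⟩⟩

variable [InnerProductSpace ℝ E]

theorem exists_isProjOn [CompleteSpace E] (hne : C.Nonempty) (hclosed : IsClosed C)
    (hC : Convex ℝ C) (x : E) : ∃ p, IsProjOn C x p :=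
  let ⟨p, hp, h⟩ := exists_norm_eq_iInf_of_complete_convex hne hclosed.isComplete hC x
  ⟨p, (isProjOn_iff_norm_eq_iInf hp).2 h⟩

theorem IsProjOn.inner_sub_nonpos (hC : Convex ℝ C) (h : IsProjOn C x p) (hq : q ∈ C) :
    ⟪x - p, q - p⟫ ≤ 0 :=
  (norm_eq_iInf_iff_real_inner_le_zero hC h.1).1 ((isProjOn_iff_norm_eq_iInf h.1).1 h) q hq

theorem IsProjOn.norm_sub_le (hC : Convex ℝ C) (hp : IsProjOn C x p) (hq : IsProjOn C y q) :
    ‖p - q‖ ≤ ‖x - y‖ := by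
  have h₁ := hp.inner_sub_nonpos hC hq.1
  have h₂ := hq.inner_sub_nonpos hC hp.1
  have key : ‖p - q‖ ^ 2 ≤ ‖x - y‖ * ‖p - q‖ := calc
    ‖p - q‖ ^ 2 ≤ ⟪x - y, p - q⟫ := by
      rw [show q - p = -(p - q) by abel, inner_neg_right] at h₁
      rw [← real_inner_self_eq_norm_sq]
      nth_rw 1 [show p - q = (x - y) - (x - p) + (y - q) by abel]
      rw [inner_add_left, inner_sub_left]
      linarith
    _ ≤ ‖x - y‖ * ‖p - q‖ := real_inner_le_norm _ _
  nlinarith [norm_nonneg (p - q), norm_nonneg (x - y)]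

theorem IsProjOn.norm_sub_le_mul_norm_sub {a b : E} {η : ℝ} (hC : Convex ℝ C) (hη : 0 ≤ η)
    (hp : IsProjOn C (x - η • a) p) (hq : IsProjOn C (x - η • b) q) :
    ‖p - q‖ ≤ η * ‖a - b‖ := by
  calc ‖p - q‖ ≤ ‖(x - η • a) - (x - η • b)‖ := hp.norm_sub_le hC hq
    _ = η * ‖a - b‖ := by
      rw [sub_sub_sub_cancel_left, ← smul_sub, norm_smul, Real.norm_of_nonneg hη, norm_sub_rev]

theorem IsProjOn.mul_norm_sub_le_mul_norm_sub {g ps pt : E} {s t : ℝ} (hC : Convex ℝ C)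
    (hs : 0 < s) (hst : s ≤ t) (hps : IsProjOn C (x - s • g) ps)
    (hpt : IsProjOn C (x - t • g) pt) :
    s * ‖x - pt‖ ≤ t * ‖x - ps‖ := by
  have h₁ := hps.inner_sub_nonpos hC hpt.1
  have h₂ := hpt.inner_sub_nonpos hC hps.1
  rw [show x - s • g - ps = (x - ps) - s • g by abel,
    show pt - ps = (x - ps) - (x - pt) by abel] at h₁
  rw [show x - t • g - pt = (x - pt) - t • g by abel,
    show ps - pt = (x - pt) - (x - ps) by abel] at h₂
  set a := x - ps
  set b := x - pt
  simp only [inner_sub_left, inner_sub_right, real_inner_smul_left,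
    real_inner_self_eq_norm_sq] at h₁ h₂
  -- weighting the two variational inequalities by `t` and `s` eliminates `g`
  have key : t * ‖a‖ ^ 2 + s * ‖b‖ ^ 2 ≤ (s + t) * (‖a‖ * ‖b‖) := calc
    _ ≤ (s + t) * ⟪b, a⟫ := by
      rw [real_inner_comm b a] at h₁
      linarith [mul_le_mul_of_nonneg_left h₁ (hs.le.trans hst),
        mul_le_mul_of_nonneg_left h₂ hs.le]
    _ ≤ (s + t) * (‖a‖ * ‖b‖) := by
      rw [mul_comm ‖a‖]
      exact mul_le_mul_of_nonneg_left (real_inner_le_norm b a) (by linarith)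
  have hab : (t * ‖a‖ - s * ‖b‖) * (‖a‖ - ‖b‖) ≤ 0 := by linear_combination key
  by_contra! hlt
  have hba : ‖b‖ ≤ ‖a‖ := by nlinarith
  nlinarith [norm_nonneg b]

end Projection

theorem convex_binfBall (m : ℕ) (lam : ℝ) : Convex ℝ (BinfBall m lam) := by
  simp only [BinfBall, Set.ofPred_forall, abs_le]
  exact convex_iInter fun i =>
    (convex_Icc (-lam) lam).linear_preimage (EuclideanSpace.proj i).toLinearMap

theorem isClosed_binfBall (m : ℕ) (lam : ℝ) : IsClosed (BinfBall m lam) := by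
  simp only [BinfBall, Set.ofPred_forall]
  exact isClosed_iInter fun i => isClosed_le (by fun_prop) continuous_const

section Matrix

variable {m d : ℕ} (D : Matrix (Fin m) (Fin d) ℝ)

open scoped Matrix.Norms.L2Operator in
theorem sigmaMax_eq_l2_opNorm_mul_self :
    sigmaMax D = ‖D‖ * ‖D‖ := by
  rw [sigmaMax, l2_opNorm_toEuclideanCLM, ← l2_opNorm_conjTranspose D,
    ← l2_opNorm_conjTranspose_mul_self, conjTranspose_conjTranspose,
    conjTranspose_eq_transpose_of_trivial]

open scoped Matrix.Norms.L2Operator in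
theorem norm_toEuclideanLin_le (v : EuclideanSpace ℝ (Fin d)) :
    ‖toEuclideanLin D v‖ ≤ √(sigmaMax D) * ‖v‖ := by
  rw [sigmaMax_eq_l2_opNorm_mul_self, Real.sqrt_mul_self (norm_nonneg _)]
  exact l2_opNorm_mulVec D v

theorem inner_toEuclideanLin_transpose (a : EuclideanSpace ℝ (Fin m))
    (b : EuclideanSpace ℝ (Fin d)) :
    ⟪toEuclideanLin Dᵀ a, b⟫ = ⟪a, toEuclideanLin D b⟫ := by
  rw [← conjTranspose_eq_transpose_of_trivial, toEuclideanLin_conjTranspose_eq_adjoint,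
    LinearMap.adjoint_inner_left]

end Matrix

section Subgradient

variable {E : Type*} [NormedAddCommGroup E] [InnerProductSpace ℝ E] {F : E → ℝ} {x : E}

theorem HasGradientAt.eq_of_forall_add_inner_le [CompleteSpace E] {G g : E}
    (hF : HasGradientAt F G x) (hg : ∀ y, F x + ⟪g, y - x⟫ ≤ F y) : G = g := by
  have hmin : IsLocalMin (fun y => F y - ⟪g, y⟫) x := Filter.Eventually.of_forall fun y => by
    have := hg y
    rw [inner_sub_right] at this
    dsimp only
    linarith
  have := hmin.hasFDerivAt_eq_zero
    (hF.hasFDerivAt.sub (InnerProductSpace.toDual ℝ E g).hasFDerivAt)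
  rw [← map_sub, ← (InnerProductSpace.toDual ℝ E).map_zero] at this
  exact sub_eq_zero.1 ((InnerProductSpace.toDual ℝ E).injective this)

theorem add_inner_sub_le_of_isLUB {ι : Type*} {v : ι → E} {c : ι → ℝ}
    (hF : ∀ y, IsLUB (Set.range fun i => ⟪y, v i⟫ - c i) (F y)) {i₀ : ι}
    (hi₀ : ∀ i, ⟪x, v i⟫ - c i ≤ ⟪x, v i₀⟫ - c i₀) (y : E) :
    F x + ⟪v i₀, y - x⟫ ≤ F y := by
  have hFx : F x = ⟪x, v i₀⟫ - c i₀ :=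
    (hF x).unique (IsGreatest.isLUB ⟨⟨i₀, rfl⟩, Set.forall_mem_range.2 hi₀⟩)
  have hFy : ⟪y, v i₀⟫ - c i₀ ≤ F y := (hF y).1 ⟨i₀, rfl⟩
  rw [hFx, inner_sub_right, real_inner_comm x, real_inner_comm y]
  linarith

end Subgradient

theorem gdga_distance_to_optimal_set_general
    (d m : ℕ)
    (f : EuclideanSpace ℝ (Fin d) → ℝ)
    (D : Matrix (Fin m) (Fin d) ℝ) (lam : ℝ)
    (fstar : EuclideanSpace ℝ (Fin d) → ℝ)
    (hfstar : ∀ x, IsLUB (Set.range fun β => ⟪x, β⟫ - f β) (fstar x))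
    (fbar : EuclideanSpace ℝ (Fin m) → ℝ)
    (hfbar : ∀ a, fbar a = fstar (Matrix.toEuclideanLin (𝕜 := ℝ) Dᵀ a))
    (fbar' : EuclideanSpace ℝ (Fin m) → EuclideanSpace ℝ (Fin m))
    (hfbar' : ∀ a, HasGradientAt fbar (fbar' a) a)
    (Ω : Set (EuclideanSpace ℝ (Fin m)))
    (βs : EuclideanSpace ℝ (Fin m) → EuclideanSpace ℝ (Fin d))
    (hβs : ∀ a β, f (βs a) - ⟪a, Matrix.toEuclideanLin (𝕜 := ℝ) D (βs a)⟫ ≤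
        f β - ⟪a, Matrix.toEuclideanLin (𝕜 := ℝ) D β⟫)
    (τ : ℝ) (hτ : 0 < τ)
    (herr : ∀ a ∈ BinfBall m lam, ∀ pΩ, IsProjOn Ω a pΩ →
      ∀ pB, IsProjOn (BinfBall m lam) (a - fbar' a) pB → ‖a - pΩ‖ ≤ τ * ‖a - pB‖)
    (epsh : ℝ)
    (η : ℝ) (hη : 0 < η) (hη1 : η < 1)
    (α : ℕ → EuclideanSpace ℝ (Fin m)) (β : ℕ → EuclideanSpace ℝ (Fin d))
    (hαmem : ∀ t, α t ∈ BinfBall m lam)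
    (hβ : ∀ t, ‖β t - βs (α t)‖ ≤ epsh)
    (hstep : ∀ t, IsProjOn (BinfBall m lam)
      (α t - η • Matrix.toEuclideanLin (𝕜 := ℝ) D (β t)) (α (t + 1))) :
    ∀ t : ℕ, ∀ p, IsProjOn Ω (α t) p →
      ‖α t - p‖ ≤ (τ / η) * ‖α t - α (t + 1)‖ + τ * Real.sqrt (sigmaMax D) * epsh := by
  intro t p hp
  set x := α t
  have hlub (y) : IsLUB (Set.range fun b => ⟪y, toEuclideanLin D b⟫ - f b) (fbar y) := by
    simpa only [hfbar, inner_toEuclideanLin_transpose] using hfstar (toEuclideanLin Dᵀ y)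
  have hgrad : fbar' x = toEuclideanLin D (βs x) :=
    (hfbar' x).eq_of_forall_add_inner_le
      (add_inner_sub_le_of_isLUB hlub fun b => by linarith [hβs x b])
  have hC := convex_binfBall m lam
  have hproj := exists_isProjOn ⟨x, hαmem t⟩ (isClosed_binfBall m lam) hC
  obtain ⟨pB, hpB⟩ := hproj (x - fbar' x)
  obtain ⟨u, hu⟩ := hproj (x - η • toEuclideanLin D (βs x))
  have hscale : η * ‖x - pB‖ ≤ ‖x - u‖ := by
    have hpB' : IsProjOn (BinfBall m lam) (x - (1 : ℝ) • toEuclideanLin D (βs x)) pB := by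
      rwa [one_smul, ← hgrad]
    simpa only [one_mul] using hu.mul_norm_sub_le_mul_norm_sub hC hη hη1.le hpB'
  have hinexact : ‖α (t + 1) - u‖ ≤ η * (√(sigmaMax D) * epsh) := by
    refine (hstep t |>.norm_sub_le_mul_norm_sub hC hη.le hu).trans ?_
    rw [← map_sub]
    gcongr
    exact (norm_toEuclideanLin_le D _).trans (by gcongr; exact hβ t)
  calc ‖x - p‖ ≤ τ * ‖x - pB‖ := herr x (hαmem t) p hp pB hpB
    _ = τ / η * (η * ‖x - pB‖) := by field_simp
    _ ≤ τ / η * (‖x - α (t + 1)‖ + ‖α (t + 1) - u‖) := by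
      gcongr
      exact hscale.trans (norm_sub_le_norm_sub_add_norm_sub _ _ _)
    _ ≤ τ / η * (‖x - α (t + 1)‖ + η * (√(sigmaMax D) * epsh)) := by gcongr
    _ = τ / η * ‖x - α (t + 1)‖ + τ * √(sigmaMax D) * epsh := by field_simp

/-- for a GDGA sequence with step size `η ∈ (0, min{1, μ/(4σ)})`, under the
global error bound with constant `τ > 0`, for every `t`,
`‖α_t − proj_{Ω*}(α_t)‖ ≤ (τ/η)‖α_t − α_{t+1}‖ + τ√σ ε̂`. -/
theorem gdga_distance_to_optimal_set
    (d m : ℕ) (hd : 0 < d) (hm : 0 < m)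
    (f : EuclideanSpace ℝ (Fin d) → ℝ)
    (f' : EuclideanSpace ℝ (Fin d) → EuclideanSpace ℝ (Fin d))
    (μ ℓ : ℝ) (hμ : 0 < μ) (hμℓ : μ ≤ ℓ)
    (hconv : ConvexOn ℝ Set.univ f)
    (hgrad : ∀ x, HasGradientAt f (f' x) x)
    (hsc : ∀ β₁ β₂ : EuclideanSpace ℝ (Fin d),
      μ * ‖β₁ - β₂‖ ^ 2 ≤ ⟪f' β₁ - f' β₂, β₁ - β₂⟫)
    (hlip : ∀ β₁ β₂ : EuclideanSpace ℝ (Fin d),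
      ‖f' β₁ - f' β₂‖ ≤ ℓ * ‖β₁ - β₂‖)
    (D : Matrix (Fin m) (Fin d) ℝ) (lam : ℝ) (hlam : 0 < lam)
    (fstar : EuclideanSpace ℝ (Fin d) → ℝ)
    (hfstar : ∀ x, IsLUB (Set.range fun β => ⟪x, β⟫ - f β) (fstar x))
    (fbar : EuclideanSpace ℝ (Fin m) → ℝ)
    (hfbar : ∀ a, fbar a = fstar (Matrix.toEuclideanLin (𝕜 := ℝ) Dᵀ a))
    (fbar' : EuclideanSpace ℝ (Fin m) → EuclideanSpace ℝ (Fin m))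
    (hfbar' : ∀ a, HasGradientAt fbar (fbar' a) a)
    (Ω : Set (EuclideanSpace ℝ (Fin m)))
    (hΩ : Ω = {a | a ∈ BinfBall m lam ∧ ∀ a' ∈ BinfBall m lam, fbar a ≤ fbar a'})
    (βs : EuclideanSpace ℝ (Fin m) → EuclideanSpace ℝ (Fin d))
    (hβs : ∀ a β, f (βs a) - ⟪a, Matrix.toEuclideanLin (𝕜 := ℝ) D (βs a)⟫ ≤
        f β - ⟪a, Matrix.toEuclideanLin (𝕜 := ℝ) D β⟫)
    (τ : ℝ) (hτ : 0 < τ)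
    (herr : ∀ a ∈ BinfBall m lam, ∀ pΩ, IsProjOn Ω a pΩ →
      ∀ pB, IsProjOn (BinfBall m lam) (a - fbar' a) pB → ‖a - pΩ‖ ≤ τ * ‖a - pB‖)
    (epsh : ℝ) (hepsh : 0 ≤ epsh)
    (η : ℝ) (hη : 0 < η) (hη1 : η < 1) (hη' : η < μ / (4 * sigmaMax D))
    (α : ℕ → EuclideanSpace ℝ (Fin m)) (β : ℕ → EuclideanSpace ℝ (Fin d))
    (hαmem : ∀ t, α t ∈ BinfBall m lam)
    (hβ : ∀ t, ‖β t - βs (α t)‖ ≤ epsh)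
    (hstep : ∀ t, IsProjOn (BinfBall m lam)
      (α t - η • Matrix.toEuclideanLin (𝕜 := ℝ) D (β t)) (α (t + 1))) :
    ∀ t : ℕ, ∀ p, IsProjOn Ω (α t) p →
      ‖α t - p‖ ≤ (τ / η) * ‖α t - α (t + 1)‖ + τ * Real.sqrt (sigmaMax D) * epsh :=
  gdga_distance_to_optimal_set_general d m f D lam fstar hfstar fbar hfbar fbar' hfbar' Ω βs hβs τ
    hτ herr epsh η hη hη1 α β hαmem hβ hstep
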